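/- There exists a total problem f : ℕ^ℕ ⇉ ℕ^ℕ (i.e., f(p) ≠ ∅ for all p ∈ ℕ^ℕ) that is parallelizable (f ≤_W ⟨f⟩ and ⟨f⟩ ≤_W f), discontinuous (has no continuous realizer), but not effectively discontinuous. -/

import Mathlib

noncomputable section

/-- Baire space `ℕ^ℕ`. -/
abbrev Baire : Type := ℕ → ℕ

/-- The Cantor pairing `⟨n,k⟩ = (n+k)(n+k+1)/2 + k`. -/
def cpair (n k : ℕ) : ℕ := (n + k) * (n + k + 1) / 2 + k

/-- The inverse of the Cantor pairing. -/
noncomputable def cunpair (m : ℕ) : ℕ × ℕ :=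
  Classical.epsilon fun x : ℕ × ℕ => cpair x.1 x.2 = m

/-- A fixed bijective numbering `w : ℕ → List ℕ` of finite words. -/
def word (n : ℕ) : List ℕ := Denumerable.ofNat (List ℕ) n

/-- `l` is a finite prefix of the infinite sequence `p`. -/
def IsPrefixOf (l : List ℕ) (p : Baire) : Prop := l = (List.range l.length).map p

/-- Two words are comparable in the prefix order. -/
def WordComparable (u v : List ℕ) : Prop := u <+: v ∨ v <+: u

/-- The word `w(n_i)` decoded from the `i`-th entry of the code `q`. -/
noncomputable def wn (q : Baire) (i : ℕ) : List ℕ := word (cunpair (q i)).1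

/-- The word `w(k_i)` decoded from the `i`-th entry of the code `q`. -/
noncomputable def wk (q : Baire) (i : ℕ) : List ℕ := word (cunpair (q i)).2

/-- The code `q` is consistent. -/
def ConsistentCode (q : Baire) : Prop :=
  ∀ i j, WordComparable (wn q i) (wn q j) → WordComparable (wk q i) (wk q j)

/-- The continuous partial function `Φ_q :⊆ ℕ^ℕ → ℕ^ℕ` coded by `q`. -/
noncomputable def Phi (q : Baire) : Baire →. Baire := fun p =>
  ⟨ConsistentCode q ∧ ∀ m : ℕ, ∃ i, IsPrefixOf (wn q i) p ∧ m < (wk q i).length,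
   fun _ => Classical.epsilon fun x : Baire =>
      ∀ i, IsPrefixOf (wn q i) p → IsPrefixOf (wk q i) x⟩

/-- The pairing `⟨q,p⟩` on Baire space. -/
def bpair (q p : Baire) : Baire := fun n => if n % 2 = 0 then q (n / 2) else p (n / 2)

/-- Even part of a sequence. -/
def evens (r : Baire) : Baire := fun n => r (2 * n)

/-- Odd part of a sequence. -/
def odds (r : Baire) : Baire := fun n => r (2 * n + 1)

/-- The universal function `U(⟨q,p⟩) = Φ_q(p)`. -/
noncomputable def U : Baire →. Baire := fun r => Phi (evens r) (odds r)

/-- `h` is monotone for the prefix order. -/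
def MonotoneWord (h : List ℕ → List ℕ) : Prop := ∀ u v, u <+: v → h u <+: h v

/-- `h` approximates the partial function `F`. -/
def Approximates (h : List ℕ → List ℕ) (F : Baire →. Baire) : Prop :=
  ∀ p, ∀ hp : (F p).Dom,
    (∀ v, IsPrefixOf v p → IsPrefixOf (h v) ((F p).get hp)) ∧
    (∀ m : ℕ, ∃ v, IsPrefixOf v p ∧ m < (h v).length)

/-- `F :⊆ ℕ^ℕ → ℕ^ℕ` is continuous: some monotone word function approximates it. -/
def ContinuousPF (F : Baire →. Baire) : Prop := ∃ h, MonotoneWord h ∧ Approximates h F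

/-- `F :⊆ ℕ^ℕ → ℕ^ℕ` is computable: some computable monotone word function approximates it. -/
def ComputablePF (F : Baire →. Baire) : Prop :=
  ∃ h, Computable h ∧ MonotoneWord h ∧ Approximates h F

/-- A total function is computable iff it is computable as a partial function with full domain. -/
def ComputableTotal (F : Baire → Baire) : Prop := ComputablePF fun p => Part.some (F p)

/-- A problem (multivalued function on Baire space). -/
abbrev Problem : Type := Baire → Set Baire

/-- `F` is a realizer of the problem `f`. -/
def Realizes (F : Baire →. Baire) (f : Problem) : Prop :=
  ∀ p, (f p).Nonempty → ∃ h : (F p).Dom, (F p).get h ∈ f p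

/-- `f` is continuous: it has a continuous realizer. -/
def ContinuousProblem (f : Problem) : Prop := ∃ F, ContinuousPF F ∧ Realizes F f

/-- The discontinuity problem `DIS`. -/
noncomputable def DIS : Problem := fun p => {q | q ∉ U p}

/-- `D` is a discontinuity function for `f`. -/
def DiscontinuityFunction (D : Baire → Baire) (f : Problem) : Prop :=
  ∀ q, (f (D q)).Nonempty ∧ ∀ y ∈ Phi q (D q), y ∉ f (D q)

/-- `f` is computably discontinuous. -/
def ComputablyDiscontinuous (f : Problem) : Prop :=
  ∃ D, ComputableTotal D ∧ DiscontinuityFunction D f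

/-- `f` is effectively discontinuous. -/
def EffectivelyDiscontinuous (f : Problem) : Prop :=
  ∃ D : Baire → Baire, Continuous D ∧ DiscontinuityFunction D f

/-- Weihrauch reducibility `f ≤_W g`. -/
def WeihrauchRed (f g : Problem) : Prop :=
  ∃ H K : Baire →. Baire, ComputablePF H ∧ ComputablePF K ∧
    ∀ G : Baire →. Baire, Realizes G g →
      Realizes (fun p => (K p).bind fun s => (G s).bind fun t => H (bpair p t)) f

/-- Strong Weihrauch reducibility `f ≤_sW g`. -/
def StrongWeihrauchRed (f g : Problem) : Prop :=
  ∃ H K : Baire →. Baire, ComputablePF H ∧ ComputablePF K ∧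
    ∀ G : Baire →. Baire, Realizes G g →
      Realizes (fun p => (K p).bind fun s => (G s).bind fun t => H t) f

/-- Continuous Weihrauch reducibility `f ≤*_W g`. -/
def ContWeihrauchRed (f g : Problem) : Prop :=
  ∃ H K : Baire →. Baire, ContinuousPF H ∧ ContinuousPF K ∧
    ∀ G : Baire →. Baire, Realizes G g →
      Realizes (fun p => (K p).bind fun s => (G s).bind fun t => H (bpair p t)) f

/-- Continuous strong Weihrauch reducibility `f ≤*_sW g`. -/
def ContStrongWeihrauchRed (f g : Problem) : Prop :=
  ∃ H K : Baire →. Baire, ContinuousPF H ∧ ContinuousPF K ∧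
    ∀ G : Baire →. Baire, Realizes G g →
      Realizes (fun p => (K p).bind fun s => (G s).bind fun t => H t) f

/-- Concatenation of the first `n` moves. -/
def concatN (ms : ℕ → List ℕ) (n : ℕ) : List ℕ := ((List.range n).map ms).flatten

/-- The concatenated play is infinite. -/
def PlayInf (ms : ℕ → List ℕ) : Prop := ∀ m : ℕ, ∃ n, m < (concatN ms n).length

/-- The infinite sequence determined by an infinite play. -/
noncomputable def playLim (ms : ℕ → List ℕ) : Baire :=
  Classical.epsilon fun p : Baire => ∀ n, IsPrefixOf (concatN ms n) p

/-- Player II wins the run of the Wadge game of `f` given by the moves `xs` of I and `ys` of II. -/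
def WadgeIIWins (f : Problem) (xs ys : ℕ → List ℕ) : Prop :=
  (PlayInf xs ∧ (f (playLim xs)).Nonempty) → (PlayInf ys ∧ playLim ys ∈ f (playLim xs))

/-- The list of first `n` moves. -/
def histW (xs : ℕ → List ℕ) (n : ℕ) : List (List ℕ) := (List.range n).map xs

/-- `σ` is a winning strategy for Player II in the Wadge game of `f`. -/
def WadgeWinningII (f : Problem) (σ : List (List ℕ) → List ℕ) : Prop :=
  ∀ xs : ℕ → List ℕ, WadgeIIWins f xs fun i => σ (histW xs (i + 1))

/-- `σ` is a winning strategy for Player I in the Wadge game of `f`. -/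
def WadgeWinningI (f : Problem) (σ : List (List ℕ) → List ℕ) : Prop :=
  ∀ ys : ℕ → List ℕ, ¬ WadgeIIWins f (fun i => σ (histW ys i)) ys

/-- The list of first `n` values of a sequence. -/
def histN (x : Baire) (n : ℕ) : List ℕ := (List.range n).map x

/-- Player II wins the run `(x,y)` of the Lipschitz game of `f`. -/
def LipIIWins (f : Problem) (x y : Baire) : Prop := (f x).Nonempty → y ∈ f x

/-- `σ` is a winning strategy for Player II in the Lipschitz game of `f`. -/
def LipWinningII (f : Problem) (σ : List ℕ → ℕ) : Prop :=
  ∀ x : Baire, LipIIWins f x fun i => σ (histN x (i + 1))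

/-- `σ` is a winning strategy for Player I in the Lipschitz game of `f`. -/
def LipWinningI (f : Problem) (σ : List ℕ → ℕ) : Prop :=
  ∀ y : Baire, ¬ LipIIWins f (fun i => σ (histN y i)) y

/-- `σ` is a winning strategy for Player II in the Gale–Stewart game `A`. -/
def GSWinningII (A : Set Baire) (σ : List ℕ → ℕ) : Prop :=
  ∀ x : Baire, bpair x (fun i => σ (histN x (i + 1))) ∈ A

/-- `σ` is a winning strategy for Player I in the Gale–Stewart game `A`. -/
def GSWinningI (A : Set Baire) (σ : List ℕ → ℕ) : Prop :=
  ∀ y : Baire, bpair (fun i => σ (histN y i)) y ∉ A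

/-- The totalization `Tf` of `f`. -/
def Totalization (f : Problem) : Problem := fun p => {q | (f p).Nonempty → q ∈ f p}

/-- The paired graph `⟨graph(Tf)⟩ ⊆ ℕ^ℕ`. -/
def pairedGraph (f : Problem) : Set Baire :=
  {r | ∃ x y : Baire, r = bpair x y ∧ y ∈ Totalization f x}

/-- Domain of the word concatenation map `w*`. -/
def wstarDom (p : Baire) : Prop := PlayInf fun i => word (p i)

/-- The word concatenation map `w* : p ↦ w(p 0) w(p 1) ⋯` (on its domain). -/
noncomputable def wstar (p : Baire) : Baire := playLim fun i => word (p i)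

/-- The problem `f^w = w*⁻¹ ∘ f ∘ w*`. -/
noncomputable def wordLift (f : Problem) : Problem := fun p =>
  {q | wstarDom p ∧ (f (wstar p)).Nonempty ∧ wstarDom q ∧ wstar q ∈ f (wstar p)}

/-- The `i`-th component of a tupled sequence. -/
def tupleComp (p : Baire) (i : ℕ) : Baire := fun n => p (cpair i n)

/-- The parallelization `⟨f⟩` of `f`. -/
def Parallelization (f : Problem) : Problem := fun p =>
  {q | ∀ i, tupleComp q i ∈ f (tupleComp p i)}

/-- Turing reducibility: `p` is computable relative to the oracle `q`. -/
def TuringLe (p q : Baire) : Prop := ∃ F : Baire →. Baire, ComputablePF F ∧ p ∈ F q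

end

/-!
The witness is `coneAvoidance c`: given `p`, output a point different from `c q` for every
`q ≤_T p`. Turing cones are countable, so this problem is total, and it only gets harder up the
Turing degrees, so it is parallelizable. The map `c` comes from a diagonalization of the length of
the continuum, at each stage of which fewer than continuum many choices have been made. For every
word function `h` a fresh point `p` gets `c p := hlim h p`, so `h` does not approximate a realizer
at `p`. For every continuous `D` a fresh value `y` is reserved and the countable cone below
`D (constCode y)` is kept free of later points; then `y` solves the instance `D (constCode y)`,
although `Φ_{constCode y}` is constantly `y`.
-/

noncomputable section

open Set Cardinal

universe u

section CantorPairing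

/-- The index `n + k` of the antidiagonal through `cpair n k`, recovered by a square root. -/
def cdiag (m : ℕ) : ℕ := (Nat.sqrt (8 * m + 1) - 1) / 2

def csnd (m : ℕ) : ℕ := m - cdiag m * (cdiag m + 1) / 2

def cfst (m : ℕ) : ℕ := cdiag m - csnd m

theorem cdiag_cpair (n k : ℕ) : cdiag (cpair n k) = n + k := by
  set s := n + k
  have htri : 2 * (s * (s + 1) / 2) = s * (s + 1) := by
    have : 2 ∣ s * (s + 1) := (Nat.even_mul_succ_self s).two_dvd
    omega
  have hm : cpair n k = s * (s + 1) / 2 + k := rfl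
  have hlb : 2 * s + 1 ≤ Nat.sqrt (8 * cpair n k + 1) := by
    rw [Nat.le_sqrt]; nlinarith
  have hub : Nat.sqrt (8 * cpair n k + 1) < 2 * s + 3 := by
    have : k ≤ s := Nat.le_add_left k n
    rw [Nat.sqrt_lt]; nlinarith
  unfold cdiag
  omega

theorem csnd_cpair (n k : ℕ) : csnd (cpair n k) = k := by
  rw [csnd, cdiag_cpair, cpair]
  omega

theorem cfst_cpair (n k : ℕ) : cfst (cpair n k) = n := by
  rw [cfst, cdiag_cpair, csnd_cpair]
  omega

theorem cpair_injective {n k n' k' : ℕ} (h : cpair n k = cpair n' k') : n = n' ∧ k = k' :=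
  ⟨by rw [← cfst_cpair n k, h, cfst_cpair], by rw [← csnd_cpair n k, h, csnd_cpair]⟩

theorem cunpair_cpair (n k : ℕ) : cunpair (cpair n k) = (n, k) := by
  have h := Classical.epsilon_spec (p := fun x : ℕ × ℕ => cpair x.1 x.2 = cpair n k) ⟨(n, k), rfl⟩
  exact Prod.ext (cpair_injective h).1 (cpair_injective h).2

theorem primrec_cpair : Primrec₂ cpair := by
  have hsum : Primrec₂ ((· + ·) : ℕ → ℕ → ℕ) := Primrec.nat_add
  exact Primrec.nat_add.comp₂
    (Primrec.nat_div.comp₂ (Primrec.nat_mul.comp₂ hsum (Primrec.nat_add.comp₂ hsum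
      (Primrec₂.const 1))) (Primrec₂.const 2))
    Primrec₂.right

theorem primrec_csnd : Primrec csnd := by
  have hdiag : Primrec cdiag :=
    Primrec.nat_div.comp (Primrec.nat_sub.comp (Primrec.nat_sqrt.comp
      (Primrec.nat_add.comp (Primrec.nat_mul.comp (Primrec.const 8) Primrec.id)
        (Primrec.const 1))) (Primrec.const 1)) (Primrec.const 2)
  exact Primrec.nat_sub.comp Primrec.id (Primrec.nat_div.comp
    (Primrec.nat_mul.comp hdiag (Primrec.nat_add.comp hdiag (Primrec.const 1))) (Primrec.const 2))

end CantorPairing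

section Prefixes

theorem length_histN (p : Baire) (n : ℕ) : (histN p n).length = n := by
  simp [histN]

theorem isPrefixOf_histN (p : Baire) (n : ℕ) : IsPrefixOf (histN p n) p := by
  rw [IsPrefixOf, length_histN]
  rfl

theorem histN_prefix_histN (p : Baire) {a b : ℕ} (h : a ≤ b) : histN p a <+: histN p b := by
  rw [histN, histN, ← Nat.add_sub_cancel' h, List.range_add, List.map_append]
  exact List.prefix_append _ _

theorem IsPrefixOf.getD_eq {v : List ℕ} {p : Baire} (h : IsPrefixOf v p) {i : ℕ}
    (hi : i < v.length) : v.getD i 0 = p i := by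
  rw [h, List.getD_eq_getElem _ _ (by simpa using hi)]
  simp

theorem IsPrefixOf.prefix_of_length_le {u v : List ℕ} {p : Baire} (hu : IsPrefixOf u p)
    (hv : IsPrefixOf v p) (h : u.length ≤ v.length) : u <+: v := by
  rw [hu, hv]
  exact histN_prefix_histN p h

theorem IsPrefixOf.apply_eq {l : List ℕ} {x y : Baire} (hx : IsPrefixOf l x)
    (hy : IsPrefixOf l y) {n : ℕ} (hn : n < l.length) : x n = y n := by
  rw [← hx.getD_eq hn, hy.getD_eq hn]

end Prefixes

def hlim (h : List ℕ → List ℕ) (p : Baire) : Baire :=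
  Classical.epsilon fun x : Baire => ∀ v, IsPrefixOf v p → IsPrefixOf (h v) x

theorem hlim_eq {h : List ℕ → List ℕ} {p x : Baire}
    (hunb : ∀ m, ∃ v, IsPrefixOf v p ∧ m < (h v).length)
    (hx : ∀ v, IsPrefixOf v p → IsPrefixOf (h v) x) : hlim h p = x := by
  have he := Classical.epsilon_spec
    (p := fun x : Baire => ∀ v, IsPrefixOf v p → IsPrefixOf (h v) x) ⟨x, hx⟩
  funext n
  obtain ⟨v, hvp, hn⟩ := hunb n
  exact (he v hvp).apply_eq (hx v hvp) hn

section ComputableMaps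

/-- How many coordinates of `fun m => p (g m)` a finite prefix `v` of `p` determines. -/
def reindexLength (g : ℕ → ℕ) (v : List ℕ) : ℕ :=
  Nat.findGreatest (fun n => ∀ i < n, g i < v.length) v.length

def reindexWord (g : ℕ → ℕ) (v : List ℕ) : List ℕ :=
  (List.range (reindexLength g v)).map fun i => v.getD (g i) 0

theorem lt_length_of_lt_reindexLength {g : ℕ → ℕ} {v : List ℕ} {i : ℕ}
    (h : i < reindexLength g v) : g i < v.length :=
  Nat.findGreatest_spec (P := fun n => ∀ i < n, g i < v.length) (Nat.zero_le _)
    (fun _ h => absurd h (Nat.not_lt_zero _)) i h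

theorem le_reindexLength {g : ℕ → ℕ} {v : List ℕ} {n : ℕ} (hn : n ≤ v.length)
    (h : ∀ i < n, g i < v.length) : n ≤ reindexLength g v :=
  Nat.le_findGreatest hn h

theorem reindexWord_monotone (g : ℕ → ℕ) : MonotoneWord (reindexWord g) := by
  intro v w hvw
  have hle : reindexLength g v ≤ reindexLength g w :=
    le_reindexLength ((Nat.findGreatest_le _).trans hvw.length_le)
      fun i hi => (lt_length_of_lt_reindexLength hi).trans_le hvw.length_le
  have htake : reindexWord g v = (reindexWord g w).take (reindexLength g v) := by
    rw [reindexWord, reindexWord, ← List.map_take, List.take_range, Nat.min_eq_left hle]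
    refine List.map_congr_left fun i hi => ?_
    obtain ⟨t, rfl⟩ := hvw
    exact (List.getD_append _ _ _ _ (lt_length_of_lt_reindexLength (List.mem_range.1 hi))).symm
  rw [htake]
  exact List.take_prefix _ _

theorem reindexWord_approximates (g : ℕ → ℕ) :
    Approximates (reindexWord g) fun p => Part.some fun m => p (g m) := by
  intro p _
  constructor
  · intro v hv
    have hlen : (reindexWord g v).length = reindexLength g v := by simp [reindexWord]
    rw [IsPrefixOf, hlen, reindexWord]
    refine List.map_congr_left fun i hi => ?_
    exact hv.getD_eq (lt_length_of_lt_reindexLength (List.mem_range.1 hi))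
  · intro m
    set N := max ((Finset.range (m + 1)).sup g + 1) (m + 1)
    refine ⟨histN p N, isPrefixOf_histN p N, ?_⟩
    have : m + 1 ≤ reindexLength g (histN p N) := by
      refine le_reindexLength (by simp [length_histN, N]) fun i hi => ?_
      have : g i ≤ (Finset.range (m + 1)).sup g := Finset.le_sup (Finset.mem_range.2 hi)
      rw [length_histN]
      omega
    simpa [reindexWord] using this

theorem primrec_reindexWord {g : ℕ → ℕ} (hg : Primrec g) : Primrec (reindexWord g) := by
  have hlen : Primrec (reindexLength g) :=
    have hbound : PrimrecRel fun n m => ∀ i < n, g i < m :=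
      PrimrecRel.forall_lt (Primrec.nat_lt.comp₂ (hg.comp₂ Primrec₂.left) Primrec₂.right)
    Primrec.nat_findGreatest Primrec.list_length
      (hbound.comp Primrec.snd (Primrec.list_length.comp Primrec.fst))
  exact Primrec.list_map (Primrec.list_range.comp hlen)
    ((Primrec.list_getD 0).comp Primrec.fst (hg.comp Primrec.snd))

theorem computablePF_reindex {g : ℕ → ℕ} (hg : Primrec g) :
    ComputablePF fun p => Part.some fun m => p (g m) :=
  ⟨reindexWord g, (primrec_reindexWord hg).to_comp, reindexWord_monotone g,
    reindexWord_approximates g⟩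

end ComputableMaps

theorem ComputablePF.bind {F₁ F₂ : Baire →. Baire} (h₁ : ComputablePF F₁) (h₂ : ComputablePF F₂) :
    ComputablePF fun p => (F₁ p).bind F₂ := by
  obtain ⟨h, hc, hm, ha⟩ := h₁
  obtain ⟨h', hc', hm', ha'⟩ := h₂
  refine ⟨fun v => h' (h v), hc'.comp hc, fun u v huv => hm' _ _ (hm u v huv), fun p hp => ?_⟩
  obtain ⟨s, hs, hz⟩ := Part.mem_bind_iff.1 (Part.get_mem hp)
  have hd₁ : (F₁ p).Dom := Part.dom_iff_mem.2 ⟨s, hs⟩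
  have hd₂ : (F₂ s).Dom := Part.dom_iff_mem.2 ⟨_, hz⟩
  obtain ⟨ha₁, hunb₁⟩ := ha p hd₁
  obtain ⟨ha₂, hunb₂⟩ := ha' s hd₂
  rw [Part.get_eq_of_mem hs hd₁] at ha₁
  rw [Part.get_eq_of_mem hz hd₂] at ha₂
  refine ⟨fun v hv => ha₂ _ (ha₁ v hv), fun m => ?_⟩
  obtain ⟨u, hu, hum⟩ := hunb₂ m
  obtain ⟨v, hv, hlen⟩ := hunb₁ u.length
  exact ⟨v, hv, hum.trans_le (hm' _ _ (hu.prefix_of_length_le (ha₁ v hv) hlen.le)).length_le⟩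

section Turing

theorem TuringLe.refl (p : Baire) : TuringLe p p :=
  ⟨fun p => Part.some p, computablePF_reindex Primrec.id, Part.mem_some p⟩

theorem TuringLe.trans {q s p : Baire} (hqs : TuringLe q s) (hsp : TuringLe s p) :
    TuringLe q p := by
  obtain ⟨F₁, hF₁, hq⟩ := hqs
  obtain ⟨F₂, hF₂, hs⟩ := hsp
  exact ⟨fun p => (F₂ p).bind F₁, hF₂.bind hF₁, Part.mem_bind_iff.2 ⟨s, hs, hq⟩⟩

theorem turingLe_tupleComp (p : Baire) (i : ℕ) : TuringLe (tupleComp p i) p :=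
  ⟨fun p => Part.some fun n => p (cpair i n),
    computablePF_reindex (primrec_cpair.comp (Primrec.const i) Primrec.id), Part.mem_some _⟩

instance : Countable {h : List ℕ → List ℕ // Computable h} := by
  refine Function.Injective.countable (β := {f : ℕ → ℕ // Computable f})
    (f := fun h => ⟨fun n => Encodable.encode (h.1 (Denumerable.ofNat _ n)),
      Computable.encode.comp (h.2.comp (Computable.ofNat _))⟩) fun h₁ h₂ he => ?_
  refine Subtype.ext (funext fun v => Encodable.encode_injective ?_)
  simpa using congrFun (congrArg Subtype.val he) (Encodable.encode v)

/-- Each `q ≤_T p` is `hlim h p` for one of countably many computable word functions `h`. -/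
theorem countable_setOf_turingLe (p : Baire) : {q | TuringLe q p}.Countable := by
  refine (Set.countable_range fun h : {h : List ℕ → List ℕ // Computable h} => hlim h.1 p).mono ?_
  rintro q ⟨F, ⟨h, hc, -, ha⟩, hq⟩
  have hd : (F p).Dom := Part.dom_iff_mem.2 ⟨q, hq⟩
  obtain ⟨hpre, hunb⟩ := ha p hd
  rw [Part.get_eq_of_mem hq hd] at hpre
  exact ⟨⟨h, hc⟩, hlim_eq hunb hpre⟩

end Turing

/-- The code of the constant map with value `y`: the empty word is sent to every prefix of `y`. -/
def constCode (y : Baire) : Baire := fun i =>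
  cpair (Encodable.encode ([] : List ℕ)) (Encodable.encode (histN y i))

theorem wn_constCode (y : Baire) (i : ℕ) : wn (constCode y) i = [] := by
  rw [wn, constCode, cunpair_cpair]
  exact Denumerable.ofNat_encode _

theorem wk_constCode (y : Baire) (i : ℕ) : wk (constCode y) i = histN y i := by
  rw [wk, constCode, cunpair_cpair]
  exact Denumerable.ofNat_encode _

theorem mem_phi_constCode (y p : Baire) : y ∈ Phi (constCode y) p := by
  have hcons : ConsistentCode (constCode y) := fun i j _ => by
    simp only [WordComparable, wk_constCode]
    exact (le_total i j).imp (histN_prefix_histN y) (histN_prefix_histN y)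
  have hpre : ∀ i, IsPrefixOf (wn (constCode y) i) p := fun i => by
    rw [wn_constCode]; rfl
  have hdom : (Phi (constCode y) p).Dom :=
    ⟨hcons, fun m => ⟨m + 1, hpre _, by rw [wk_constCode, length_histN]; omega⟩⟩
  have hy : ∀ i, IsPrefixOf (wn (constCode y) i) p → IsPrefixOf (wk (constCode y) i) y :=
    fun i _ => by rw [wk_constCode]; exact isPrefixOf_histN y i
  have heps := Classical.epsilon_spec (p := fun x : Baire =>
    ∀ i, IsPrefixOf (wn (constCode y) i) p → IsPrefixOf (wk (constCode y) i) x) ⟨y, hy⟩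
  have hval : (Phi (constCode y) p).get hdom = y := funext fun n =>
    (heps (n + 1) (hpre _)).apply_eq (hy (n + 1) (hpre _))
      (by rw [wk_constCode, length_histN]; omega)
  simpa only [hval] using Part.get_mem hdom

section Weihrauch

theorem bpair_odd (q p : Baire) (k : ℕ) : bpair q p (2 * k + 1) = p k := by
  simp only [bpair, if_neg (by omega : (2 * k + 1) % 2 ≠ 0)]
  congr 1
  omega

theorem tupleComp_comp_csnd (p : Baire) (i : ℕ) : tupleComp (fun m => p (csnd m)) i = p :=
  funext fun n => congrArg p (csnd_cpair i n)

theorem weihrauchRed_of_computable {f g : Problem} {K H : Baire → Baire}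
    (hK : ComputablePF fun p => Part.some (K p)) (hH : ComputablePF fun r => Part.some (H r))
    (hdom : ∀ p, (f p).Nonempty → (g (K p)).Nonempty)
    (hsol : ∀ p t, (f p).Nonempty → t ∈ g (K p) → H (bpair p t) ∈ f p) : WeihrauchRed f g := by
  refine ⟨_, _, hH, hK, fun G hG p hp => ?_⟩
  obtain ⟨hd, hsolves⟩ := hG (K p) (hdom p hp)
  have hmem : H (bpair p ((G (K p)).get hd)) ∈
      (Part.some (K p)).bind fun s => (G s).bind fun t => Part.some (H (bpair p t)) :=
    Part.mem_bind_iff.2 ⟨K p, Part.mem_some _,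
      Part.mem_bind_iff.2 ⟨_, Part.get_mem hd, Part.mem_some _⟩⟩
  exact ⟨Part.dom_iff_mem.2 ⟨_, hmem⟩, by rw [Part.get_eq_of_mem hmem]; exact hsol p _ hp hsolves⟩

/-- A single instance is solved by asking `⟨f⟩` about the sequence of copies of it. -/
theorem weihrauchRed_parallelization (f : Problem) : WeihrauchRed f (Parallelization f) := by
  refine weihrauchRed_of_computable (K := fun p m => p (csnd m))
    (H := fun r m => r (2 * cpair 0 m + 1)) (computablePF_reindex primrec_csnd)
    (computablePF_reindex (Primrec.succ.comp (Primrec.nat_mul.comp (Primrec.const 2)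
      (primrec_cpair.comp (Primrec.const 0) Primrec.id)))) ?_ ?_
  · rintro p ⟨x, hx⟩
    exact ⟨fun m => x (csnd m), fun i => by simpa only [tupleComp_comp_csnd] using hx⟩
  · intro p t _ ht
    have hfst : (fun m => bpair p t (2 * cpair 0 m + 1)) = tupleComp t 0 :=
      funext fun m => bpair_odd p t _
    simpa only [hfst, tupleComp_comp_csnd] using ht 0

/-- A solution for `p` solves every component `tupleComp p i ≤_T p`. -/
theorem parallelization_weihrauchRed {f : Problem} (htot : ∀ p, (f p).Nonempty)
    (hanti : ∀ s p, TuringLe s p → f p ⊆ f s) : WeihrauchRed (Parallelization f) f := by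
  refine weihrauchRed_of_computable (K := id) (H := fun r m => r (2 * csnd m + 1))
    (computablePF_reindex Primrec.id)
    (computablePF_reindex (Primrec.succ.comp (Primrec.nat_mul.comp (Primrec.const 2)
      primrec_csnd))) (fun p _ => htot p) ?_
  intro p t _ ht i
  have hsnd : (fun m => bpair p t (2 * csnd m + 1)) = fun m => t (csnd m) :=
    funext fun m => bpair_odd p t _
  rw [hsnd, tupleComp_comp_csnd]
  exact hanti _ _ (turingLe_tupleComp p i) ht

end Weihrauch

section ConeAvoidance

theorem aleph0_lt_mk_baire : ℵ₀ < #Baire := by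
  simpa using aleph0_lt_continuum

theorem Set.Countable.compl_nonempty_baire {s : Set Baire} (hs : s.Countable) : sᶜ.Nonempty :=
  compl_nonempty_of_mk_lt_mk (hs.le_aleph0.trans_lt aleph0_lt_mk_baire)

def coneAvoidance (c : Baire → Baire) : Problem := fun p => {x | ∀ q, TuringLe q p → c q ≠ x}

theorem coneAvoidance_nonempty (c : Baire → Baire) (p : Baire) : (coneAvoidance c p).Nonempty := by
  obtain ⟨x, hx⟩ := ((countable_setOf_turingLe p).image c).compl_nonempty_baire
  exact ⟨x, fun q hq hqx => hx ⟨q, hq, hqx⟩⟩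

theorem coneAvoidance_antitone (c : Baire → Baire) {s p : Baire} (hsp : TuringLe s p) :
    coneAvoidance c p ⊆ coneAvoidance c s :=
  fun _ hx q hqs => hx q (hqs.trans hsp)

theorem not_continuousProblem_coneAvoidance {c : Baire → Baire}
    (hc : ∀ h : List ℕ → List ℕ, ∃ p, c p = hlim h p) : ¬ ContinuousProblem (coneAvoidance c) := by
  rintro ⟨F, ⟨h, -, happrox⟩, hreal⟩
  obtain ⟨p, hp⟩ := hc h
  obtain ⟨hd, hsol⟩ := hreal p (coneAvoidance_nonempty c p)
  obtain ⟨hpre, hunb⟩ := happrox p hd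
  exact hsol p (TuringLe.refl p) (hp.trans (hlim_eq hunb hpre))

theorem not_effectivelyDiscontinuous_coneAvoidance {c : Baire → Baire}
    (hc : ∀ D : Baire → Baire, Continuous D → ∃ y, y ∈ coneAvoidance c (D (constCode y))) :
    ¬ EffectivelyDiscontinuous (coneAvoidance c) := by
  rintro ⟨D, hD, hdisc⟩
  obtain ⟨y, hy⟩ := hc D hD
  exact (hdisc (constCode y)).2 y (mem_phi_constCode y _) hy

end ConeAvoidance

section Diagonalization

variable {α ι : Type u} [LinearOrder ι] [WellFoundedLT ι]

theorem mk_iUnion_lt_of_countable {κ : Type u} {s : κ → Set α} (hα : ℵ₀ < #α) (hκ : #κ < #α)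
    (hs : ∀ k, (s k).Countable) : #(⋃ k, s k) < #α := by
  refine (mk_iUnion_le s).trans_lt (mul_lt_of_lt hα.le hκ ?_)
  exact (ciSup_le' fun k => (hs k).le_aleph0).trans_lt hα

/-- Transfinite construction along `ι`: at stage `t` pick a fresh value, different from the values
`V j` takes at the earlier points, and then a fresh point, outside the earlier points and the
countable sets `C j` attached to the values chosen so far. -/
theorem exists_fresh_values_points (hα : ℵ₀ < #α) (hι : ∀ t : ι, #(Iio t) < #α)
    (V : ι → α → α) (C : ι → α → Set α) (hC : ∀ t y, (C t y).Countable) (d : α) :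
    ∃ value point : ι → α, (∀ t, value t ≠ d) ∧ (∀ j t, j < t → V j (point j) ≠ value t) ∧
      (∀ j t, j < t → point j ≠ point t) ∧ (∀ j t, j ≤ t → point t ∉ C j (value j)) := by
  have hstep : ∀ t (prev : Iio t → α × α), ∃ s : α × α,
      s.1 ∉ {d} ∪ range (fun j : Iio t => V j (prev j).2) ∧
      s.2 ∉ range (fun j : Iio t => (prev j).2) ∪ (⋃ j : Iio t, C j (prev j).1) ∪ C t s.1 := by
    intro t prev
    have union_lt : ∀ {s s' : Set α}, #s < #α → #s' < #α → #(s ∪ s' : Set α) < #α :=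
      fun hs hs' => (mk_union_le _ _).trans_lt (add_lt_of_lt hα.le hs hs')
    have range_lt : ∀ f : Iio t → α, #(range f) < #α := fun f => mk_range_le.trans_lt (hι t)
    have countable_lt : ∀ {s : Set α}, s.Countable → #s < #α := fun hs => hs.le_aleph0.trans_lt hα
    obtain ⟨y, hy⟩ := compl_nonempty_of_mk_lt_mk
      (union_lt (countable_lt (countable_singleton d)) (range_lt fun j => V j (prev j).2))
    obtain ⟨p, hp⟩ := compl_nonempty_of_mk_lt_mk (union_lt (union_lt (range_lt fun j => (prev j).2)
      (mk_iUnion_lt_of_countable hα (hι t) fun j => hC j (prev j).1)) (countable_lt (hC t y)))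
    exact ⟨(y, p), hy, hp⟩
  choose next hnext using hstep
  let stage : ι → α × α := wellFounded_lt.fix fun t prev => next t fun j => prev j j.2
  have hstage : ∀ t, stage t = next t fun j => stage j := fun t => wellFounded_lt.fix_eq _ t
  have hfresh : ∀ t, (stage t).1 ∉ {d} ∪ range (fun j : Iio t => V j (stage j).2) ∧
      (stage t).2 ∉ range (fun j : Iio t => (stage j).2) ∪ (⋃ j : Iio t, C j (stage j).1) ∪
        C t (stage t).1 := fun t => by
    rw [hstage t]; exact hnext t _
  refine ⟨fun t => (stage t).1, fun t => (stage t).2, fun t h => (hfresh t).1 (Or.inl h),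
    fun j t hjt h => (hfresh t).1 (Or.inr ⟨⟨j, hjt⟩, h⟩),
    fun j t hjt h => (hfresh t).2 (Or.inl (Or.inl ⟨⟨j, hjt⟩, h⟩)), fun j t hjt h => ?_⟩
  rcases hjt.lt_or_eq with hjt | rfl
  · exact (hfresh t).2 (Or.inl (Or.inr (mem_iUnion.2 ⟨⟨j, hjt⟩, h⟩)))
  · exact (hfresh j).2 (Or.inr h)

theorem exists_diagonalizing_map (hα : ℵ₀ < #α) (hι : ∀ t : ι, #(Iio t) < #α)
    (V : ι → α → α) (C : ι → α → Set α) (hC : ∀ t y, (C t y).Countable) :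
    ∃ c : α → α, (∀ t, ∃ p, c p = V t p) ∧ ∀ t, ∃ y, ∀ q ∈ C t y, c q ≠ y := by
  obtain ⟨d⟩ : Nonempty α := mk_ne_zero_iff.1 (aleph0_pos.trans hα).ne'
  obtain ⟨value, point, hvalue_ne, hvalue_fresh, hpoint_fresh, hpoint_avoids⟩ :=
    exists_fresh_values_points hα hι V C hC d
  have hpoint_inj : Function.Injective point := fun j t h => by
    by_contra hne
    rcases lt_or_gt_of_ne hne with hjt | htj
    · exact hpoint_fresh j t hjt h
    · exact hpoint_fresh t j htj h.symm
  classical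
  let c : α → α := fun q => if h : ∃ t, point t = q then V h.choose q else d
  refine ⟨c, fun t => ⟨point t, ?_⟩, fun t => ⟨value t, fun q hq hcq => ?_⟩⟩
  · have h : ∃ j, point j = point t := ⟨t, rfl⟩
    simp only [c, dif_pos h, hpoint_inj h.choose_spec]
  · by_cases h : ∃ j, point j = q
    · simp only [c, dif_pos h] at hcq
      have hj : point h.choose = q := h.choose_spec
      rcases lt_or_ge h.choose t with hjt | htj
      · exact hvalue_fresh _ t hjt (by rw [hj]; exact hcq)
      · exact hpoint_avoids t _ htj (by rw [hj]; exact hq)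
    · simp only [c, dif_neg h] at hcq
      exact hvalue_ne t hcq.symm

end Diagonalization

theorem mk_continuous_le {X Y : Type u} [TopologicalSpace X] [TopologicalSpace.SeparableSpace X]
    [Nonempty X] [TopologicalSpace Y] [T2Space Y] : #{f : X → Y // Continuous f} ≤ #(ℕ → Y) :=
  mk_le_of_injective (f := fun f n => f.1 (TopologicalSpace.denseSeq X n)) fun f g hfg =>
    Subtype.ext (Continuous.ext_on (TopologicalSpace.denseRange_denseSeq X) f.2 g.2
      (by rintro _ ⟨n, rfl⟩; exact congrFun hfg n))

theorem exists_surjective_of_mk_le {β γ : Type u} [Nonempty γ] (h : #γ ≤ #β) :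
    ∃ f : β → γ, Function.Surjective f :=
  let ⟨e⟩ := (le_def γ β).1 h
  ⟨Function.invFun e, Function.invFun_surjective e.injective⟩

theorem exists_map_defeating_realizers_and_discontinuity_functions :
    ∃ c : Baire → Baire, (∀ h : List ℕ → List ℕ, ∃ p, c p = hlim h p) ∧
      ∀ D : Baire → Baire, Continuous D → ∃ y, y ∈ coneAvoidance c (D (constCode y)) := by
  let ι := (#Baire).ord.ToType
  have hmk : #ι = #Baire := mk_ord_toType _
  have hι : ∀ t : ι, #(Iio t) < #Baire := fun t =>
    (mk_Iio_lt t (by rw [hmk, Ordinal.type_toType])).trans_eq hmk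
  obtain ⟨wordAt, hwordAt⟩ := exists_surjective_of_mk_le (β := ι) (γ := List ℕ → List ℕ) <|
    hmk ▸ (mk_congr (Equiv.arrowCongr (Denumerable.eqv (List ℕ)) (Denumerable.eqv (List ℕ)))).le
  have : Nonempty {D : Baire → Baire // Continuous D} := ⟨⟨id, continuous_id⟩⟩
  obtain ⟨mapAt, hmapAt⟩ :=
    exists_surjective_of_mk_le (β := ι) (γ := {D : Baire → Baire // Continuous D})
    (hmk ▸ mk_continuous_le.trans (mk_congr ((Equiv.curry ℕ ℕ ℕ).symm.trans
      (Equiv.arrowCongr (Denumerable.eqv (ℕ × ℕ)) (Equiv.refl ℕ)))).le)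
  obtain ⟨c, hreal, heff⟩ := exists_diagonalizing_map aleph0_lt_mk_baire hι
    (fun t => hlim (wordAt t)) (fun t y => {q | TuringLe q ((mapAt t).1 (constCode y))})
    fun t y => countable_setOf_turingLe _
  refine ⟨c, fun h => ?_, fun D hD => ?_⟩
  · obtain ⟨t, rfl⟩ := hwordAt h
    exact hreal t
  · obtain ⟨t, ht⟩ := hmapAt ⟨D, hD⟩
    obtain ⟨y, hy⟩ := heff t
    exact ⟨y, fun q hq => hy q (by rw [ht]; exact hq)⟩

end

/-- There exists a total parallelizable problem that is discontinuous but not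
effectively discontinuous. -/
theorem exists_total_parallelizable_discontinuous_not_effectively :
    ∃ f : Problem, (∀ p : Baire, (f p).Nonempty) ∧
      WeihrauchRed f (Parallelization f) ∧ WeihrauchRed (Parallelization f) f ∧
      ¬ ContinuousProblem f ∧ ¬ EffectivelyDiscontinuous f := by
  obtain ⟨c, hreal, heff⟩ := exists_map_defeating_realizers_and_discontinuity_functions
  exact ⟨coneAvoidance c, coneAvoidance_nonempty c, weihrauchRed_parallelization _,
    parallelization_weihrauchRed (coneAvoidance_nonempty c) fun _ _ => coneAvoidance_antitone c,
    not_continuousProblem_coneAvoidance hreal, not_effectivelyDiscontinuous_coneAvoidance heff⟩
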